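/- For all continuous functions f, g : X → ℝ, the one-sided limit lim_{τ → 0⁺} (β(f + τ·g) − β(f))/τ exists and equals sup_{μ ∈ M_max(f)} ∫ g dμ. -/

import Mathlib

open MeasureTheory

variable {X : Type*} [MetricSpace X] [CompactSpace X] [MeasurableSpace X] [BorelSpace X]

/-- The set of `T`-invariant Borel probability measures on `X`. -/
def invMeasures (T : X → X) : Set (ProbabilityMeasure X) :=
  {μ | MeasurePreserving T (μ : Measure X) (μ : Measure X)}

/-- `beta T f = sup_{μ ∈ M_T} ∫ f dμ`. -/
noncomputable def beta (T : X → X) (f : X → ℝ) : ℝ :=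
  sSup ((fun μ : ProbabilityMeasure X => ∫ x, f x ∂(μ : Measure X)) '' invMeasures T)

/-- The set of maximising measures of `f`. -/
def Mmax (T : X → X) (f : X → ℝ) : Set (ProbabilityMeasure X) :=
  {μ | μ ∈ invMeasures T ∧ ∫ x, f x ∂(μ : Measure X) = beta T f}

/-- The set of integrals of `g` against the maximising measures of `f`. -/
noncomputable def maxInts (T : X → X) (f g : X → ℝ) : Set ℝ :=
  (fun μ : ProbabilityMeasure X => ∫ x, g x ∂(μ : Measure X)) '' Mmax T f

/-!
For continuous `T` the invariant measures form a closed, hence compact, subset `K` of the compact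
space of probability measures with the topology of weak convergence, on which `μ ↦ ∫ f dμ` and
`μ ↦ ∫ g dμ` are continuous, and `β(f + τ g) = max_{μ ∈ K} (∫ f dμ + τ ∫ g dμ)`. The theorem is
therefore an instance of Danskin's theorem on the one-sided derivative of a maximum of affine
functions over a compact set: the bound `≥` comes from testing against a maximiser of `f`; for
`≤`, a maximiser of `f + τ g` with `∫ g` larger than the expected limit by `ε` stays a fixed
distance `δ` below `β(f)` in `∫ f`, which `τ ∫ g` cannot compensate once `τ` is small.
-/

open Filter Topology Set

section Danskin

variable {α : Type*} [TopologicalSpace α] {K : Set α} {F G : α → ℝ}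

theorem IsCompact.exists_pos_forall_le_sSup_image_sub (hK : IsCompact K) (hF : Continuous F)
    {C : Set α} (hC : IsClosed C) (hKC : ∀ x ∈ K ∩ C, F x ≠ sSup (F '' K)) :
    ∃ δ > 0, ∀ x ∈ K ∩ C, F x ≤ sSup (F '' K) - δ := by
  rcases (K ∩ C).eq_empty_or_nonempty with hempty | hne
  · exact ⟨1, one_pos, by simp [hempty]⟩
  obtain ⟨c, hc, hcmax⟩ := (hK.inter_right hC).exists_isMaxOn hne hF.continuousOn
  have hFc : F c < sSup (F '' K) :=
    (le_csSup (hK.image hF).bddAbove (mem_image_of_mem F hc.1)).lt_of_ne (hKC c hc)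
  exact ⟨sSup (F '' K) - F c, sub_pos.2 hFc, fun x hx => by linarith [isMaxOn_iff.1 hcmax x hx]⟩

theorem IsCompact.sSup_add_mul_sSup_le_sSup_image_add_mul (hK : IsCompact K) (hne : K.Nonempty)
    (hF : Continuous F) (hG : Continuous G) (τ : ℝ) :
    sSup (F '' K) + τ * sSup (G '' {x ∈ K | F x = sSup (F '' K)})
      ≤ sSup ((fun x => F x + τ * G x) '' K) := by
  have hM : IsCompact {x ∈ K | F x = sSup (F '' K)} :=
    hK.inter_right (isClosed_eq hF continuous_const)
  obtain ⟨x₁, hx₁K, hx₁⟩ := (hK.image hF).sSup_mem (hne.image F)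
  obtain ⟨x₀, ⟨hx₀K, hx₀F⟩, hx₀G⟩ := (hM.image hG).sSup_mem (Set.Nonempty.image G ⟨x₁, hx₁K, hx₁⟩)
  rw [← hx₀G, ← hx₀F]
  exact le_csSup (hK.image (by fun_prop)).bddAbove (mem_image_of_mem _ hx₀K)

theorem IsCompact.eventually_sSup_image_add_mul_sub_div_lt (hK : IsCompact K) (hne : K.Nonempty)
    (hF : Continuous F) (hG : Continuous G) {ε : ℝ} (hε : 0 < ε) :
    ∀ᶠ τ in 𝓝[>] 0, (sSup ((fun x => F x + τ * G x) '' K) - sSup (F '' K)) / τ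
      < sSup (G '' {x ∈ K | F x = sSup (F '' K)}) + ε := by
  set β₀ := sSup (F '' K)
  set S := sSup (G '' {x ∈ K | F x = β₀})
  have hM : IsCompact {x ∈ K | F x = β₀} := hK.inter_right (isClosed_eq hF continuous_const)
  obtain ⟨δ, hδ, hgap⟩ := hK.exists_pos_forall_le_sSup_image_sub hF
    (isClosed_le continuous_const hG : IsClosed {x | S + ε ≤ G x}) fun x hx hFx => by
      have : G x ≤ S := le_csSup (hM.image hG).bddAbove ⟨x, ⟨hx.1, hFx⟩, rfl⟩
      linarith [hx.2.out]
  obtain ⟨B, hB⟩ := hK.exists_bound_of_continuousOn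
    (show Continuous fun x => G x - S by fun_prop).continuousOn
  have hsmall : ∀ᶠ τ in 𝓝[>] (0 : ℝ), τ * B < δ := by
    have : Tendsto (fun τ : ℝ => τ * B) (𝓝[>] 0) (𝓝 0) :=
      ((continuous_mul_const B).tendsto' 0 0 (zero_mul _)).mono_left nhdsWithin_le_nhds
    exact this.eventually (eventually_lt_nhds hδ)
  filter_upwards [hsmall, self_mem_nhdsWithin] with τ hτB (hτ : 0 < τ)
  obtain ⟨x, hxK, hx⟩ : ∃ x ∈ K, F x + τ * G x = sSup ((fun x => F x + τ * G x) '' K) :=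
    (hK.image (by fun_prop)).sSup_mem (hne.image _)
  have hFx : F x ≤ β₀ := le_csSup (hK.image hF).bddAbove (mem_image_of_mem F hxK)
  rw [← hx, div_lt_iff₀ hτ]
  by_cases hGx : G x < S + ε
  · nlinarith [mul_lt_mul_of_pos_left hGx hτ]
  -- Otherwise `x` lies in the gap region, where `τ * G` cannot make up for the loss `δ` in `F`.
  have hgapx := hgap x ⟨hxK, (not_lt.1 hGx :)⟩
  have hβτ := hK.sSup_add_mul_sSup_le_sSup_image_add_mul hne hF hG τ
  rw [← hx] at hβτ
  have hGxS := (abs_le.1 (hB x hxK)).2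
  nlinarith

theorem IsCompact.tendsto_sSup_image_add_mul_sub_div (hK : IsCompact K) (hF : Continuous F)
    (hG : Continuous G) :
    Tendsto (fun τ => (sSup ((fun x => F x + τ * G x) '' K) - sSup (F '' K)) / τ) (𝓝[>] 0)
      (𝓝 (sSup (G '' {x ∈ K | F x = sSup (F '' K)}))) := by
  rcases K.eq_empty_or_nonempty with rfl | hne
  · simp
  refine tendsto_order.2 ⟨fun a ha => ?_, fun a ha => ?_⟩
  · filter_upwards [self_mem_nhdsWithin] with τ (hτ : 0 < τ)
    rw [lt_div_iff₀ hτ]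
    nlinarith [hK.sSup_add_mul_sSup_le_sSup_image_add_mul hne hF hG τ]
  · filter_upwards [hK.eventually_sSup_image_add_mul_sub_div_lt hne hF hG (sub_pos.2 ha)]
      with τ hτ
    linarith

end Danskin

omit [CompactSpace X] in
theorem isClosed_invMeasures {T : X → X} (hT : Continuous T) : IsClosed (invMeasures T) := by
  have : invMeasures T = {μ | μ.map hT.measurable.aemeasurable = μ} := by
    ext μ
    simp only [invMeasures, mem_ofPred_eq, ← ProbabilityMeasure.toMeasure_injective.eq_iff,
      ProbabilityMeasure.toMeasure_map]
    exact ⟨MeasurePreserving.map_eq, fun h => ⟨hT.measurable, h⟩⟩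
  rw [this]
  exact isClosed_eq (ProbabilityMeasure.continuous_map hT) continuous_id

theorem integral_continuousMap_add_smul (f g : C(X, ℝ)) (τ : ℝ) (μ : Measure X)
    [IsFiniteMeasure μ] : ∫ x, (f + τ • g) x ∂μ = ∫ x, f x ∂μ + τ * ∫ x, g x ∂μ := by
  have hint : ∀ h : C(X, ℝ), Integrable h μ := fun h =>
    h.continuous.integrable_of_hasCompactSupport (HasCompactSupport.of_compactSpace _)
  simp only [ContinuousMap.add_apply, ContinuousMap.smul_apply, smul_eq_mul]
  rw [integral_add (hint f) ((hint g).const_mul τ), integral_const_mul]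

theorem beta_add_smul (T : X → X) (f g : C(X, ℝ)) (τ : ℝ) :
    beta T ⇑(f + τ • g) = sSup ((fun μ : ProbabilityMeasure X =>
      ∫ x, f x ∂(μ : Measure X) + τ * ∫ x, g x ∂(μ : Measure X)) '' invMeasures T) := by
  simp only [beta, integral_continuousMap_add_smul]

theorem stmt8_general (T : X → X) (hT : Continuous T) (f g : C(X, ℝ)) :
    Filter.Tendsto (fun τ : ℝ => (beta T ⇑(f + τ • g) - beta T ⇑f) / τ)
      (nhdsWithin 0 (Set.Ioi 0)) (nhds (sSup (maxInts T ⇑f ⇑g))) := by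
  simp only [beta_add_smul]
  exact (isClosed_invMeasures hT).isCompact.tendsto_sSup_image_add_mul_sub_div
    (ProbabilityMeasure.continuous_integral_continuousMap f)
    (ProbabilityMeasure.continuous_integral_continuousMap g)

theorem stmt8 [Nonempty X] (T : X → X) (hT : Continuous T) (f g : C(X, ℝ)) :
    Filter.Tendsto (fun τ : ℝ => (beta T ⇑(f + τ • g) - beta T ⇑f) / τ)
      (nhdsWithin 0 (Set.Ioi 0)) (nhds (sSup (maxInts T ⇑f ⇑g))) :=
  stmt8_general T hT f g
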